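/- Improved Juels-Sudan secure sketch: let F be a finite field of size n, let s and t be integers with 1 ≤ t ≤ s, and for each s-element subset w ⊆ F define SS(w) to be the coefficients of degrees s−1 down to s−t of the monic polynomial p'(z) = Π_{x∈w}(z − x). Then there exists a recovery procedure Rec such that (SS, Rec) is an average-case (SDif_s(F), m, m − t·log₂ n, t)-secure sketch for every m; in particular, for any two s-element subsets w₁, w₂ ⊆ F with SS(w₁) = SS(w₂), if there exists an s-element set w' with |w₁ Δ w'| ≤ t and |w₂ Δ w'| ≤ t, then w₁ = w₂. -/
import Mathlib


open Finset

/-- A probability distribution on a finite type. -/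
def IsDist {α : Type*} [Fintype α] (p : α → ℝ) : Prop :=
  (∀ a, 0 ≤ p a) ∧ ∑ a, p a = 1

/-- Average min-entropy `H̃∞(A | B)`. -/
noncomputable def avgMinEntropy {α β : Type*} [Fintype α] [Fintype β] (p : α × β → ℝ) : ℝ :=
  - Real.logb 2 (∑ b, ⨆ a, p (a, b))

/-- The improved Juels-Sudan sketch of an `s`-element subset `w ⊆ F`: the coefficients of
degrees `s−1` down to `s−t` of the monic polynomial `p'(z) = ∏_{x ∈ w} (z − x)`. -/
noncomputable def improvedJS {F : Type} [Field F] [DecidableEq F] (s t : ℕ)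
    (w : {w : Finset F // w.card = s}) : Fin t → F :=
  fun i => (∏ x ∈ w.1, (Polynomial.X - Polynomial.C x)).coeff (s - 1 - i.1)

open Polynomial in
private lemma improvedJS_inj {F : Type} [Field F] [DecidableEq F]
    (s t : ℕ) (ht1 : 1 ≤ t) (hts : t ≤ s)
    (w₁ w₂ w' : {w : Finset F // w.card = s})
    (hSS : improvedJS s t w₁ = improvedJS s t w₂)
    (h₁ : (symmDiff w₁.1 w'.1).card ≤ t) (h₂ : (symmDiff w₂.1 w'.1).card ≤ t) :
    w₁ = w₂ := by
  set P₁ := ∏ x ∈ w₁.1, (X - C x) with hP₁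
  set P₂ := ∏ x ∈ w₂.1, (X - C x) with hP₂
  have hm₁ : P₁.Monic := monic_prod_of_monic _ _ fun _ _ => monic_X_sub_C _
  have hm₂ : P₂.Monic := monic_prod_of_monic _ _ fun _ _ => monic_X_sub_C _
  have hd₁ : P₁.natDegree = s := by
    rw [hP₁, natDegree_prod _ _ fun x _ => X_sub_C_ne_zero x]
    simp [w₁.2]
  have hd₂ : P₂.natDegree = s := by
    rw [hP₂, natDegree_prod _ _ fun x _ => X_sub_C_ne_zero x]
    simp [w₂.2]
  -- coefficients of degrees ≥ s - t agree
  have hcoeff : ∀ N, s - t ≤ N → (P₁ - P₂).coeff N = 0 := by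
    intro N hN
    rw [coeff_sub, sub_eq_zero]
    rcases lt_trichotomy N s with hNs | rfl | hNs
    · have hi : s - 1 - (s - 1 - N) = N := by omega
      have hilt : s - 1 - N < t := by omega
      have := congrFun hSS ⟨s - 1 - N, hilt⟩
      simpa [improvedJS, hi] using this
    · rw [← hd₁, hm₁.coeff_natDegree, hd₁, ← hd₂, hm₂.coeff_natDegree]
    · rw [coeff_eq_zero_of_natDegree_lt (hd₁ ▸ hNs),
        coeff_eq_zero_of_natDegree_lt (hd₂ ▸ hNs)]
  -- the intersection is large
  have hcard : s - t ≤ (w₁.1 ∩ w₂.1).card := by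
    have hsd : ∀ w : {w : Finset F // w.card = s},
        (symmDiff w.1 w'.1).card + (w.1 ∩ w'.1).card + (w.1 ∩ w'.1).card = s + s := by
      intro w
      have hdisj : Disjoint (w.1 \ w'.1) (w'.1 \ w.1) := disjoint_sdiff_sdiff
      have e1 : (w.1 \ w'.1).card + (w.1 ∩ w'.1).card = s := by
        rw [card_sdiff_add_card_inter, w.2]
      have e2 : (w'.1 \ w.1).card + (w'.1 ∩ w.1).card = s := by
        rw [card_sdiff_add_card_inter, w'.2]
      have e3 : (symmDiff w.1 w'.1).card = (w.1 \ w'.1).card + (w'.1 \ w.1).card := by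
        rw [symmDiff_def, sup_eq_union, card_union_of_disjoint hdisj]
      rw [inter_comm] at e2
      omega
    have hA := hsd w₁
    have hB := hsd w₂
    have hU : ((w₁.1 ∩ w'.1) ∪ (w₂.1 ∩ w'.1)).card ≤ s := by
      have : (w₁.1 ∩ w'.1) ∪ (w₂.1 ∩ w'.1) ⊆ w'.1 := by
        apply union_subset <;> exact inter_subset_right
      simpa [w'.2] using card_le_card this
    have hIU : ((w₁.1 ∩ w'.1) ∩ (w₂.1 ∩ w'.1)).card + ((w₁.1 ∩ w'.1) ∪ (w₂.1 ∩ w'.1)).card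
        = (w₁.1 ∩ w'.1).card + (w₂.1 ∩ w'.1).card := card_inter_add_card_union _ _
    have hsub : (w₁.1 ∩ w'.1) ∩ (w₂.1 ∩ w'.1) ⊆ w₁.1 ∩ w₂.1 := by
      intro x hx
      simp only [mem_inter] at hx ⊢
      exact ⟨hx.1.1, hx.2.1⟩
    have := card_le_card hsub
    omega
  -- eval is zero on the intersection
  have heval : ∀ x ∈ w₁.1 ∩ w₂.1, (P₁ - P₂).eval x = 0 := by
    intro x hx
    rw [mem_inter] at hx
    have e1 : P₁.eval x = 0 := by
      rw [hP₁, eval_prod]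
      exact Finset.prod_eq_zero hx.1 (by simp)
    have e2 : P₂.eval x = 0 := by
      rw [hP₂, eval_prod]
      exact Finset.prod_eq_zero hx.2 (by simp)
    simp [e1, e2]
  -- conclude P₁ = P₂
  have hPP : P₁ = P₂ := by
    rcases Nat.eq_zero_or_pos (s - t) with h0 | hpos
    · have : P₁ - P₂ = 0 := by
        ext N
        simpa using hcoeff N (by omega)
      exact sub_eq_zero.mp this
    · have hdeg : (P₁ - P₂).natDegree ≤ s - t - 1 :=
        natDegree_le_iff_coeff_eq_zero.mpr fun N hN => hcoeff N (by omega)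
      have := eq_zero_of_natDegree_lt_card_of_eval_eq_zero' (P₁ - P₂) (w₁.1 ∩ w₂.1)
        heval (lt_of_le_of_lt hdeg (by omega))
      exact sub_eq_zero.mp this
  -- roots determine the set
  have hroots : w₁.1.val = w₂.1.val := by
    have r1 : P₁.roots = w₁.1.val := roots_prod_X_sub_C w₁.1
    have r2 : P₂.roots = w₂.1.val := roots_prod_X_sub_C w₂.1
    rw [← r1, ← r2, hPP]
  exact Subtype.ext (Finset.val_injective hroots)

private lemma security_gen {α β : Type} [Fintype α] [Fintype β] [DecidableEq β] (SS : α → β) (m : ℝ)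
    (ι : Type) [Fintype ι] (p : α × ι → ℝ)
    (hp : IsDist p) (hm : m ≤ avgMinEntropy p) :
    m - Real.logb 2 (Fintype.card β : ℝ)
      ≤ avgMinEntropy (fun x : α × β × ι =>
          if SS x.1 = x.2.1 then p (x.1, x.2.2) else 0) := by
  classical
  have hpn := hp.1
  -- nonemptiness
  have hne : Nonempty (α × ι) := by
    by_contra h
    rw [not_nonempty_iff] at h
    have := hp.2
    rw [Finset.univ_eq_empty, Finset.sum_empty] at this
    norm_num at this
  have hα : Nonempty α := ⟨hne.some.1⟩
  have hι : Nonempty ι := ⟨hne.some.2⟩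
  set q : α × β × ι → ℝ := fun x => if SS x.1 = x.2.1 then p (x.1, x.2.2) else 0 with hq
  have hqn : ∀ x, 0 ≤ q x := by
    intro x; rw [hq]; dsimp only; split
    · exact hpn _
    · exact le_refl 0
  have hbdd : ∀ (f : α → ℝ), BddAbove (Set.range f) := fun f =>
    Set.Finite.bddAbove (Set.finite_range f)
  set Sp : ℝ := ∑ i : ι, ⨆ a, p (a, i) with hSp
  set Sq : ℝ := ∑ b : β × ι, ⨆ a, q (a, b) with hSq
  have hqle : ∀ a (sk : β) (i : ι), q (a, (sk, i)) ≤ p (a, i) := by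
    intro a sk i
    rw [hq]; dsimp only; split
    · exact le_refl _
    · exact hpn _
  -- upper bound
  have hub : Sq ≤ (Fintype.card β : ℝ) * Sp := by
    rw [hSq, Fintype.sum_prod_type]
    calc ∑ sk : β, ∑ i : ι, ⨆ a, q (a, (sk, i))
        ≤ ∑ _sk : β, Sp := by
          apply Finset.sum_le_sum
          intro sk _
          apply Finset.sum_le_sum
          intro i _
          exact ciSup_le fun a => (hqle a sk i).trans (le_ciSup (hbdd fun a => p (a, i)) a)
      _ = (Fintype.card β : ℝ) * Sp := by
          rw [Finset.sum_const, Finset.card_univ, nsmul_eq_mul]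
  -- lower bound
  have hlb : Sp ≤ Sq := by
    rw [hSq, Fintype.sum_prod_type, Finset.sum_comm, hSp]
    apply Finset.sum_le_sum
    intro i _
    apply ciSup_le
    intro a₀
    have h1 : p (a₀, i) = q (a₀, (SS a₀, i)) := by rw [hq]; simp
    calc p (a₀, i) ≤ ⨆ a, q (a, (SS a₀, i)) := h1.le.trans (le_ciSup (hbdd fun a => q (a, (SS a₀, i))) a₀)
      _ ≤ ∑ sk : β, ⨆ a, q (a, (sk, i)) := by
          apply Finset.single_le_sum (f := fun sk => ⨆ a, q (a, (sk, i)))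
            (fun sk _ => ?_) (Finset.mem_univ _)
          exact le_trans (hqn (hα.some, (sk, i))) (le_ciSup (hbdd fun a => q (a, (sk, i))) hα.some)
  -- positivity of Sp
  have hSppos : 0 < Sp := by
    have h1 : (1 : ℝ) ≤ (Fintype.card α : ℝ) * Sp := by
      have := hp.2
      rw [Fintype.sum_prod_type] at this
      calc (1:ℝ) = ∑ a : α, ∑ i : ι, p (a, i) := this.symm
        _ ≤ ∑ _a : α, Sp := by
            apply Finset.sum_le_sum
            intro a _
            exact Finset.sum_le_sum fun i _ => le_ciSup (hbdd fun a => p (a, i)) a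
        _ = (Fintype.card α : ℝ) * Sp := by
            rw [Finset.sum_const, Finset.card_univ, nsmul_eq_mul]
    have hcα : (0:ℝ) < (Fintype.card α : ℝ) := by
      exact_mod_cast Fintype.card_pos
    nlinarith
  have hSqpos : 0 < Sq := lt_of_lt_of_le hSppos hlb
  have hcβ : (0:ℝ) < (Fintype.card β : ℝ) := by
    have : Nonempty β := ⟨SS hα.some⟩
    exact_mod_cast Fintype.card_pos
  -- log chain
  have hmono : Real.logb 2 Sq ≤ Real.logb 2 ((Fintype.card β : ℝ) * Sp) :=
    Real.logb_le_logb_of_le one_lt_two hSqpos hub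
  rw [Real.logb_mul (ne_of_gt hcβ) (ne_of_gt hSppos)] at hmono
  have hm' : m ≤ - Real.logb 2 Sp := hm
  show m - Real.logb 2 (Fintype.card β : ℝ) ≤ - Real.logb 2 Sq
  linarith

/-- The improved Juels-Sudan construction is an average-case
`(SDif_s(F), m, m − t·log₂ n, t)`-secure sketch (where `n = |F|`), for every `m`; in
particular, if `SS(w₁) = SS(w₂)` and some `s`-element set `w'` is within set-difference
distance `t` of both `w₁` and `w₂`, then `w₁ = w₂`. -/
theorem improvedJS_secure_sketch {F : Type} [Field F] [Fintype F] [DecidableEq F]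
    (s t : ℕ) (ht1 : 1 ≤ t) (hts : t ≤ s) (m : ℝ) :
    ∃ Rec : {w : Finset F // w.card = s} → (Fin t → F) → {w : Finset F // w.card = s},
      -- correctness
      (∀ w w' : {w : Finset F // w.card = s},
        (symmDiff w.1 w'.1).card ≤ t → Rec w' (improvedJS s t w) = w) ∧
      -- "in particular": the sketch separates sets that are both close to a common w'
      (∀ w₁ w₂ w' : {w : Finset F // w.card = s},
        improvedJS s t w₁ = improvedJS s t w₂ →
        (symmDiff w₁.1 w'.1).card ≤ t → (symmDiff w₂.1 w'.1).card ≤ t → w₁ = w₂) ∧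
      -- average-case security with entropy loss t·log₂ n
      ∀ (ι : Type) [Fintype ι] (p : {w : Finset F // w.card = s} × ι → ℝ),
        IsDist p → m ≤ avgMinEntropy p →
        m - (t : ℝ) * Real.logb 2 (Fintype.card F : ℝ)
          ≤ avgMinEntropy (fun x : {w : Finset F // w.card = s} × (Fin t → F) × ι =>
              if improvedJS s t x.1 = x.2.1 then p (x.1, x.2.2) else 0) := by
  classical
  refine ⟨fun w' sk => if h : ∃ w, improvedJS s t w = sk ∧ (symmDiff w.1 w'.1).card ≤ t
      then h.choose else w', ?_, ?_, ?_⟩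
  · intro w w' hd
    have h : ∃ v, improvedJS s t v = improvedJS s t w ∧ (symmDiff v.1 w'.1).card ≤ t :=
      ⟨w, rfl, hd⟩
    dsimp only
    rw [dif_pos h]
    exact improvedJS_inj s t ht1 hts _ w w' h.choose_spec.1 h.choose_spec.2 hd
  · intro w₁ w₂ w' hSS h1 h2
    exact improvedJS_inj s t ht1 hts w₁ w₂ w' hSS h1 h2
  · intro ι _ p hp hm
    have h := security_gen (improvedJS s t) m ι p hp hm
    have e : Real.logb 2 (Fintype.card (Fin t → F) : ℝ)
        = (t : ℝ) * Real.logb 2 (Fintype.card F : ℝ) := by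
      rw [Fintype.card_fun, Fintype.card_fin]
      push_cast
      rw [Real.logb_pow]
    rwa [e] at h
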